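/- arXiv:1209.1873 — 2 statements merged into one kernel-verified Lean document; each statement's English description precedes it below -/
import Mathlib

section
/- Refined primal inequality (Proposition 5, second part): Assume for each i there is a function γ_i(·) ≥ 0 such that for all a, b ∈ ℝ and every u ∈ ∂φ_i*(−b), φ_i*(−a) − φ_i*(−b) + u(a−b) ≥ γ_i(u)·(a−b)². Set γ_i = γ_i(w*ᵀx_i). Then for every w ∈ ℝ^d, every index i, and every a_i ∈ ℝ with −a_i ∈ ∂φ_i(wᵀx_i), one has |(w* − w)ᵀx_i| ≥ γ_i |a_i − α*_i|. -/
open scoped BigOperators RealInnerProductSpace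
open Finset

/-- The convex conjugate `φ*(u) = sup_z (z*u - φ z)` (as a real number; junk value
when the supremum is not finite). -/
noncomputable def fconj (φ : ℝ → ℝ) (u : ℝ) : ℝ := ⨆ z : ℝ, (z * u - φ z)

/-- `φ*(u) < ∞`, i.e. the defining supremum of the conjugate is finite. -/
def FiniteConj (φ : ℝ → ℝ) (u : ℝ) : Prop :=
  BddAbove (Set.range fun z => z * u - φ z)

/-- `g ∈ ∂φ(a)`: `g` is a subgradient of `φ` at `a`. -/
def IsSubgrad (φ : ℝ → ℝ) (a g : ℝ) : Prop :=
  ∀ b, φ a + g * (b - a) ≤ φ b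

/-- `u ∈ ∂φ*(b)`: `u` is a subgradient of the conjugate `φ*` at `b`
(the subgradient inequality being required at all points where `φ*` is finite). -/
def ConjSubgrad (φ : ℝ → ℝ) (b u : ℝ) : Prop :=
  FiniteConj φ b ∧ ∀ v, FiniteConj φ v → fconj φ b + u * (v - b) ≤ fconj φ v

/-- Dual feasibility: `φ_i*(-α_i) < ∞` for all `i`. -/
def Feas {n : ℕ} (φ : Fin n → ℝ → ℝ) (α : Fin n → ℝ) : Prop :=
  ∀ i, FiniteConj (φ i) (-(α i))

/-- `w(α) = (1/(λ n)) ∑ι α_i x_i`. -/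
noncomputable def wvec {n d : ℕ} (lam : ℝ) (x : Fin n → EuclideanSpace ℝ (Fin d))
    (α : Fin n → ℝ) : EuclideanSpace ℝ (Fin d) :=
  (1 / (lam * (n : ℝ))) • ∑ i, α i • x i

/-- The primal objective `P(w)`. -/
noncomputable def primalObj {n d : ℕ} (lam : ℝ) (x : Fin n → EuclideanSpace ℝ (Fin d))
    (φ : Fin n → ℝ → ℝ) (w : EuclideanSpace ℝ (Fin d)) : ℝ :=
  (1 / (n : ℝ)) * ∑ i, φ i ⟪x i, w⟫ + lam / 2 * ‖w‖ ^ 2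

/-- The dual objective `D(α)`. -/
noncomputable def dualObj {n d : ℕ} (lam : ℝ) (x : Fin n → EuclideanSpace ℝ (Fin d))
    (φ : Fin n → ℝ → ℝ) (α : Fin n → ℝ) : ℝ :=
  (1 / (n : ℝ)) * ∑ i, -(fconj (φ i) (-(α i))) - lam / 2 * ‖wvec lam x α‖ ^ 2

/-- The SDCA trajectory: `α^(0) = α0`, `α^(t+1) = step α^(t) (idx t)`. -/
noncomputable def traj {n : ℕ} (step : (Fin n → ℝ) → Fin n → (Fin n → ℝ))
    (α0 : Fin n → ℝ) (idx : ℕ → Fin n) : ℕ → (Fin n → ℝ)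
  | 0 => α0
  | t + 1 => step (traj step α0 idx t) (idx t)

/-- Expectation over the first `t` coordinates of a uniformly random i.i.d. index
sequence, applied to a function `g` of the index sequence (which should depend
only on the first `t` indices). -/
noncomputable def ExpIdx {n : ℕ} (hn : 0 < n) (t : ℕ) (g : (ℕ → Fin n) → ℝ) : ℝ :=
  (∑ idx : Fin t → Fin n,
      g (fun k => if h : k < t then idx ⟨k, h⟩ else (⟨0, hn⟩ : Fin n))) / (n : ℝ) ^ t

/- By the Fenchel–Young equality, `-aᵢ ∈ ∂φᵢ(wᵀxᵢ)` gives `φᵢ*(-aᵢ) = -aᵢ wᵀxᵢ - φᵢ(wᵀxᵢ)`, while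
`φᵢ*(-α*ᵢ) ≥ -α*ᵢ wᵀxᵢ - φᵢ(wᵀxᵢ)` holds by definition of the conjugate. Inserting both into the
refined strong-convexity inequality at `u = w*ᵀxᵢ` bounds `γᵢ (aᵢ - α*ᵢ)²` by
`(w* - w)ᵀxᵢ · (aᵢ - α*ᵢ)`, and cancelling one factor `|aᵢ - α*ᵢ|` gives the claim. -/

theorem abs_mul_le_abs_of_mul_sq_le_mul {c s t : ℝ} (h : c * t ^ 2 ≤ s * t) :
    c * |t| ≤ |s| := by
  rcases eq_or_ne t 0 with rfl | ht
  · simp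
  · refine le_of_mul_le_mul_right ?_ (abs_pos.mpr ht)
    calc c * |t| * |t| = c * t ^ 2 := by rw [mul_assoc, ← sq, sq_abs]
      _ ≤ s * t := h
      _ ≤ |s| * |t| := by rw [← abs_mul]; exact le_abs_self _

section Conjugate

variable {φ : ℝ → ℝ} {p g : ℝ}

theorem IsSubgrad.mul_sub_le (h : IsSubgrad φ p g) (z : ℝ) : z * g - φ z ≤ p * g - φ p := by
  have := h z
  linarith

theorem IsSubgrad.finiteConj (h : IsSubgrad φ p g) : FiniteConj φ g :=
  ⟨p * g - φ p, by rintro _ ⟨z, rfl⟩; exact h.mul_sub_le z⟩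

theorem mul_sub_le_fconj (h : FiniteConj φ g) (z : ℝ) : z * g - φ z ≤ fconj φ g :=
  le_ciSup h z

theorem IsSubgrad.fconj_eq (h : IsSubgrad φ p g) : fconj φ g = p * g - φ p :=
  le_antisymm (ciSup_le h.mul_sub_le) (mul_sub_le_fconj h.finiteConj p)

end Conjugate

theorem refined_primal_inequality_general
    (n d : ℕ)
    (x : Fin n → EuclideanSpace ℝ (Fin d))
    (φ : Fin n → ℝ → ℝ)
    (γfun : Fin n → ℝ → ℝ)
    (hrsc : ∀ i, ∀ a b u : ℝ, FiniteConj (φ i) (-a) → ConjSubgrad (φ i) (-b) u →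
      γfun i u * (a - b) ^ 2 ≤ fconj (φ i) (-a) - fconj (φ i) (-b) + u * (a - b))
    (wstar : EuclideanSpace ℝ (Fin d))
    (αstar : Fin n → ℝ)
    (hsub_conj : ∀ i, ConjSubgrad (φ i) (-(αstar i)) ⟪x i, wstar⟫)
    (w : EuclideanSpace ℝ (Fin d)) (i : Fin n) (a : ℝ)
    (ha : IsSubgrad (φ i) ⟪x i, w⟫ (-a)) :
    γfun i ⟪x i, wstar⟫ * |a - αstar i| ≤ |⟪x i, wstar - w⟫| := by
  have hstrong := hrsc i a (αstar i) _ ha.finiteConj (hsub_conj i)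
  have hfy := ha.fconj_eq
  have hlow := mul_sub_le_fconj (hsub_conj i).1 ⟪x i, w⟫
  refine abs_mul_le_abs_of_mul_sq_le_mul ?_
  rw [inner_sub_right]
  linarith

/-- Proposition 5 (second part): refined primal inequality. Under the refined
conjugate strong-convexity condition with moduli `γᵢ(·) ≥ 0`, setting
`γᵢ = γᵢ(w*ᵀxᵢ)`, for every `w`, every `i`, and every `aᵢ` with
`-aᵢ ∈ ∂φᵢ(wᵀxᵢ)`: `|(w* - w)ᵀxᵢ| ≥ γᵢ |aᵢ - α*ᵢ|`. -/
theorem refined_primal_inequality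
    (n d : ℕ) (hn : 1 ≤ n)
    (x : Fin n → EuclideanSpace ℝ (Fin d))
    (φ : Fin n → ℝ → ℝ) (hconv : ∀ i, ConvexOn ℝ Set.univ (φ i))
    (lam : ℝ) (hlam : 0 < lam)
    (γfun : Fin n → ℝ → ℝ) (hγ : ∀ i u, 0 ≤ γfun i u)
    (hrsc : ∀ i, ∀ a b u : ℝ, FiniteConj (φ i) (-a) → ConjSubgrad (φ i) (-b) u →
      γfun i u * (a - b) ^ 2 ≤ fconj (φ i) (-a) - fconj (φ i) (-b) + u * (a - b))
    (wstar : EuclideanSpace ℝ (Fin d))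
    (hwmin : ∀ w, primalObj lam x φ wstar ≤ primalObj lam x φ w)
    (αstar : Fin n → ℝ) (hstar_feas : Feas φ αstar)
    (hstar_max : ∀ β, Feas φ β → dualObj lam x φ β ≤ dualObj lam x φ αstar)
    (hws : wvec lam x αstar = wstar)
    (hsub_conj : ∀ i, ConjSubgrad (φ i) (-(αstar i)) ⟪x i, wstar⟫)
    (hsub : ∀ i, IsSubgrad (φ i) ⟪x i, wstar⟫ (-(αstar i)))
    (w : EuclideanSpace ℝ (Fin d)) (i : Fin n) (a : ℝ)
    (ha : IsSubgrad (φ i) ⟪x i, w⟫ (-a)) :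
    γfun i ⟪x i, wstar⟫ * |a - αstar i| ≤ |⟪x i, wstar - w⟫| :=
  refined_primal_inequality_general n d x φ γfun hrsc wstar αstar hsub_conj w i a ha
end

section
/- One-step dual improvement under refined strong convexity (key-dual lemma): Assume the constants γ_1,…,γ_n ≥ 0 are such that D(α*) − D(β) ≥ (1/n)∑_{i=1}^n γ_i (β_i − α*_i)² + (λ/2)‖w(β) − w*‖² for all β ∈ ℝⁿ with finite dual value. Let α ∈ ℝⁿ with φ_i*(−α_i) < ∞ for all i and w = w(α). Then for every s ∈ (0,1]: (1/n)∑_{i=1}^n [D(α + s(α*_i − α_i)e_i) − D(α)] ≥ (s/(2n))·(D(α*) − D(α)) + (3sλ/(4n))‖w* − w‖² − (s/n)²·G*(s)/(2λ), where G*(s) = (1/n)∑_{i=1}^n (‖x_i‖² − γ_i λ n / s)(α*_i − α_i)² and e_i is the i-th standard basis vector of ℝⁿ. -/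
/-!
Moving coordinate `i` a fraction `s` of the way from `α i` to `αstar i` gains at least
`s (φᵢ*(-α i) - φᵢ*(-αstar i)) / n` in the conjugate part of `D`, since `φᵢ*` is convex, and
changes the quadratic part by an explicit amount. Averaged over `i`, these bounds add up to
`(s/n) (D(αstar) - D(α) + λ/2 ‖w* - w‖²)` minus the curvature term
`(s/n)² (1/n) ∑ ‖xᵢ‖² (αstar i - α i)² / (2λ)`.
Spending half of the gap `D(αstar) - D(α)` through the refined strong convexity at `α`
yields the claimed bound.
-/
open scoped BigOperators RealInnerProductSpace
open Finset

lemma le_fconj {φ : ℝ → ℝ} {u : ℝ} (h : FiniteConj φ u) (z : ℝ) :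
    z * u - φ z ≤ fconj φ u :=
  le_ciSup h z

lemma fconj_convex_comb_le (φ : ℝ → ℝ) {u v s : ℝ} (hs0 : 0 ≤ s) (hs1 : s ≤ 1)
    (hu : FiniteConj φ u) (hv : FiniteConj φ v) :
    fconj φ ((1 - s) * u + s * v) ≤ (1 - s) * fconj φ u + s * fconj φ v := by
  refine ciSup_le fun z => ?_
  have hzu := mul_le_mul_of_nonneg_left (le_fconj hu z) (sub_nonneg.mpr hs1)
  have hzv := mul_le_mul_of_nonneg_left (le_fconj hv z) hs0
  linarith

section Dual

variable {n d : ℕ} (lam : ℝ) (x : Fin n → EuclideanSpace ℝ (Fin d)) (φ : Fin n → ℝ → ℝ)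

lemma wvec_update (α : Fin n → ℝ) (i : Fin n) (b : ℝ) :
    wvec lam x (Function.update α i b)
      = wvec lam x α + ((b - α i) / (lam * n)) • x i := by
  have hsum : ∑ j, Function.update α i b j • x j = ∑ j, α j • x j + (b - α i) • x i := by
    rw [← sub_eq_iff_eq_add', ← Finset.sum_sub_distrib, Finset.sum_eq_single i (fun j _ hj => by
      rw [Function.update_of_ne hj, sub_self]) (by simp)]
    rw [Function.update_self, sub_smul]
  rw [wvec, wvec, hsum, smul_add, smul_smul, div_eq_mul_one_div (b - α i), mul_comm (b - α i)]

lemma inner_wvec_right (v : EuclideanSpace ℝ (Fin d)) (α : Fin n → ℝ) :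
    ⟪v, wvec lam x α⟫ = 1 / (lam * n) * ∑ i, α i * ⟪v, x i⟫ := by
  simp only [wvec, real_inner_smul_right, inner_sum]

lemma dualObj_sub (α β : Fin n → ℝ) :
    dualObj lam x φ β - dualObj lam x φ α
      = 1 / n * ∑ i, (fconj (φ i) (-α i) - fconj (φ i) (-β i))
        - lam / 2 * (‖wvec lam x β‖ ^ 2 - ‖wvec lam x α‖ ^ 2) := by
  simp only [dualObj, Finset.sum_sub_distrib, Finset.sum_neg_distrib]
  ring

lemma sum_mul_inner_wvec {lam : ℝ} (hlam : lam ≠ 0) (hn : (n : ℝ) ≠ 0) (α β : Fin n → ℝ) :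
    ∑ i, (β i - α i) * ⟪wvec lam x α, x i⟫
      = lam * n * (⟪wvec lam x α, wvec lam x β⟫ - ‖wvec lam x α‖ ^ 2) := by
  rw [← real_inner_self_eq_norm_sq, inner_wvec_right, inner_wvec_right, ← mul_sub,
    ← Finset.sum_sub_distrib]
  field_simp
  exact Finset.sum_congr rfl fun i _ => by ring

variable {lam} (hlam : lam ≠ 0) {φ} {α β : Fin n → ℝ} (hα : Feas φ α) (hβ : Feas φ β)
  {s : ℝ} (hs0 : 0 ≤ s) (hs1 : s ≤ 1)
include hlam hα hβ hs0 hs1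

lemma dualObj_update_sub_ge (i : Fin n) :
    s / n * (fconj (φ i) (-α i) - fconj (φ i) (-β i))
        - s / n * ((β i - α i) * ⟪wvec lam x α, x i⟫)
        - s ^ 2 / (2 * lam * n ^ 2) * (‖x i‖ ^ 2 * (β i - α i) ^ 2)
      ≤ dualObj lam x φ (Function.update α i (α i + s * (β i - α i))) - dualObj lam x φ α := by
  have hconj : fconj (φ i) (-(α i + s * (β i - α i)))
      ≤ (1 - s) * fconj (φ i) (-α i) + s * fconj (φ i) (-β i) := by
    convert fconj_convex_comb_le (φ i) hs0 hs1 (hα i) (hβ i) using 2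
    ring
  have hsum : ∑ j, (fconj (φ j) (-α j)
        - fconj (φ j) (-Function.update α i (α i + s * (β i - α i)) j))
      = fconj (φ i) (-α i) - fconj (φ i) (-(α i + s * (β i - α i))) :=
    (Finset.sum_eq_single i (fun j _ hj => by rw [Function.update_of_ne hj, sub_self])
      (by simp)).trans (by rw [Function.update_self])
  have hnorm : lam / 2 * (‖wvec lam x (Function.update α i (α i + s * (β i - α i)))‖ ^ 2
        - ‖wvec lam x α‖ ^ 2)
      = s / n * ((β i - α i) * ⟪wvec lam x α, x i⟫)
        + s ^ 2 / (2 * lam * n ^ 2) * (‖x i‖ ^ 2 * (β i - α i) ^ 2) := by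
    rw [wvec_update, add_sub_cancel_left, norm_add_sq_real, real_inner_smul_right, norm_smul,
      Real.norm_eq_abs, mul_pow, sq_abs]
    linear_combination (s * (β i - α i) * ⟪wvec lam x α, x i⟫ / n
      + s ^ 2 * (β i - α i) ^ 2 * ‖x i‖ ^ 2 / (2 * lam * n ^ 2)) * mul_inv_cancel₀ hlam
  have hconj_gain : s / n * (fconj (φ i) (-α i) - fconj (φ i) (-β i))
      ≤ 1 / n * (fconj (φ i) (-α i) - fconj (φ i) (-(α i + s * (β i - α i)))) := by
    rw [div_eq_mul_one_div s, mul_comm s, mul_assoc]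
    exact mul_le_mul_of_nonneg_left (by linarith) (by positivity)
  rw [dualObj_sub, hsum, hnorm]
  linarith

lemma avg_dualObj_update_sub_ge (hn : (n : ℝ) ≠ 0) :
    s / n * (dualObj lam x φ β - dualObj lam x φ α
          + lam / 2 * ‖wvec lam x β - wvec lam x α‖ ^ 2)
        - (s / n) ^ 2 * (1 / n * ∑ i, ‖x i‖ ^ 2 * (β i - α i) ^ 2) / (2 * lam)
      ≤ 1 / n * ∑ i,
          (dualObj lam x φ (Function.update α i (α i + s * (β i - α i))) - dualObj lam x φ α) := by
  calc _ = 1 / (n : ℝ) * ∑ i, (s / n * (fconj (φ i) (-α i) - fconj (φ i) (-β i))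
          - s / n * ((β i - α i) * ⟪wvec lam x α, x i⟫)
          - s ^ 2 / (2 * lam * n ^ 2) * (‖x i‖ ^ 2 * (β i - α i) ^ 2)) := by
        simp only [Finset.sum_sub_distrib, ← Finset.mul_sum]
        rw [dualObj_sub, sum_mul_inner_wvec x hlam hn, norm_sub_sq_real, real_inner_comm,
          Finset.sum_sub_distrib]
        field_simp
        ring
    _ ≤ _ := mul_le_mul_of_nonneg_left
        (Finset.sum_le_sum fun i _ => dualObj_update_sub_ge x hlam hα hβ hs0 hs1 i)
        (by positivity)

end Dual

theorem key_dual_lemma_general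
    (n d : ℕ) (hn : 1 ≤ n)
    (x : Fin n → EuclideanSpace ℝ (Fin d))
    (φ : Fin n → ℝ → ℝ)
    (lam : ℝ) (hlam : 0 < lam)
    (γs : Fin n → ℝ)
    (αstar : Fin n → ℝ) (hstar_feas : Feas φ αstar)
    (hrsc : ∀ β : Fin n → ℝ, Feas φ β →
      (1 / (n : ℝ)) * ∑ i, γs i * (β i - αstar i) ^ 2
          + lam / 2 * ‖wvec lam x β - wvec lam x αstar‖ ^ 2
        ≤ dualObj lam x φ αstar - dualObj lam x φ β)
    (α : Fin n → ℝ) (hα : Feas φ α)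
    (s : ℝ) (hs0 : 0 < s) (hs1 : s ≤ 1) :
    s / (2 * (n : ℝ)) * (dualObj lam x φ αstar - dualObj lam x φ α)
        + 3 * s * lam / (4 * (n : ℝ)) * ‖wvec lam x αstar - wvec lam x α‖ ^ 2
        - (s / n) ^ 2 *
            ((1 / (n : ℝ)) *
              ∑ i, (‖x i‖ ^ 2 - γs i * lam * (n : ℝ) / s) * (αstar i - α i) ^ 2)
            / (2 * lam)
      ≤ (1 / (n : ℝ)) *
          ∑ i, (dualObj lam x φ (Function.update α i (α i + s * (αstar i - α i)))
                - dualObj lam x φ α) := by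
  have hn0 : (n : ℝ) ≠ 0 := Nat.cast_ne_zero.mpr (Nat.one_le_iff_ne_zero.mp hn)
  have hstep := avg_dualObj_update_sub_ge x hlam.ne' hα hstar_feas hs0.le hs1 hn0
  have hgap := hrsc α hα
  rw [norm_sub_rev] at hgap
  have hG : (s / n) ^ 2 *
        ((1 / (n : ℝ)) * ∑ i, (‖x i‖ ^ 2 - γs i * lam * (n : ℝ) / s) * (αstar i - α i) ^ 2)
        / (2 * lam)
      = (s / n) ^ 2 * (1 / n * ∑ i, ‖x i‖ ^ 2 * (αstar i - α i) ^ 2) / (2 * lam)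
        - s / (2 * n) * (1 / n * ∑ i, γs i * (α i - αstar i) ^ 2) := by
    have hsum : ∑ i, (‖x i‖ ^ 2 - γs i * lam * n / s) * (αstar i - α i) ^ 2
        = ∑ i, ‖x i‖ ^ 2 * (αstar i - α i) ^ 2
          - lam * n / s * ∑ i, γs i * (α i - αstar i) ^ 2 := by
      rw [Finset.mul_sum, ← Finset.sum_sub_distrib]
      exact Finset.sum_congr rfl fun i _ => by ring
    rw [hsum]
    field_simp
  linear_combination hstep + s / (2 * n) * hgap - hG

/-- Lemma 5 (key dual lemma): under refined dual strong convexity with constants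
`γᵢ ≥ 0`, the average coordinate-wise dual improvement of a step of size `s`
towards `α*` satisfies the stated lower bound. -/
theorem key_dual_lemma
    (n d : ℕ) (hn : 1 ≤ n)
    (x : Fin n → EuclideanSpace ℝ (Fin d))
    (φ : Fin n → ℝ → ℝ) (hconv : ∀ i, ConvexOn ℝ Set.univ (φ i))
    (lam : ℝ) (hlam : 0 < lam)
    (γs : Fin n → ℝ) (hγs : ∀ i, 0 ≤ γs i)
    (αstar : Fin n → ℝ) (hstar_feas : Feas φ αstar)
    (hstar_max : ∀ β, Feas φ β → dualObj lam x φ β ≤ dualObj lam x φ αstar)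
    (hrsc : ∀ β : Fin n → ℝ, Feas φ β →
      (1 / (n : ℝ)) * ∑ i, γs i * (β i - αstar i) ^ 2
          + lam / 2 * ‖wvec lam x β - wvec lam x αstar‖ ^ 2
        ≤ dualObj lam x φ αstar - dualObj lam x φ β)
    (α : Fin n → ℝ) (hα : Feas φ α)
    (s : ℝ) (hs0 : 0 < s) (hs1 : s ≤ 1) :
    s / (2 * (n : ℝ)) * (dualObj lam x φ αstar - dualObj lam x φ α)
        + 3 * s * lam / (4 * (n : ℝ)) * ‖wvec lam x αstar - wvec lam x α‖ ^ 2
        - (s / n) ^ 2 *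
            ((1 / (n : ℝ)) *
              ∑ i, (‖x i‖ ^ 2 - γs i * lam * (n : ℝ) / s) * (αstar i - α i) ^ 2)
            / (2 * lam)
      ≤ (1 / (n : ℝ)) *
          ∑ i, (dualObj lam x φ (Function.update α i (α i + s * (αstar i - α i)))
                - dualObj lam x φ α) :=
  key_dual_lemma_general n d hn x φ lam hlam γs αstar hstar_feas hrsc α hα s hs0 hs1
end
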